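/- arXiv:0804.1206 — 3 statements merged into one kernel-verified Lean document; each statement's English description precedes it below -/
import Mathlib

section
/- Let R be a complete rewriting system on (X ∪ X⁻¹)* satisfying condition C⁺, and let R⁺ be the subset of rules with positive left-hand side. Then R⁺ is a complete rewriting system on X*: it is terminating, and any two R⁺-reducts of a positive word have a common R⁺-descendant. -/
open Relation

/-- One-step reduction of the string rewriting system `R`. -/
def RWStep {α : Type*} (R : Set (List α × List α)) (u v : List α) : Prop :=
  ∃ a l r b, (l, r) ∈ R ∧ u = a ++ l ++ b ∧ v = a ++ r ++ b

/-- `R` is terminating: there is no infinite sequence of one-step reductions. -/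
def RWTerminating {α : Type*} (R : Set (List α × List α)) : Prop :=
  ¬ ∃ f : ℕ → List α, ∀ n, RWStep R (f n) (f (n + 1))

/-- A word is irreducible if no one-step reduction applies to it. -/
def RWIrred {α : Type*} (R : Set (List α × List α)) (w : List α) : Prop :=
  ¬ ∃ z, RWStep R w z


/-- A word over `X ∪ X⁻¹` (modelled as `X ⊕ X`, left = positive letters) is positive
if all its letters are positive. -/
def RWPositive {X : Type*} (w : List (X ⊕ X)) : Prop :=
  ∀ c ∈ w, Sum.isLeft c = true

/-- The subsystem of rules with positive left-hand side. -/
def RWPos {X : Type*} (R : Set (List (X ⊕ X) × List (X ⊕ X))) :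
    Set (List (X ⊕ X) × List (X ⊕ X)) :=
  {p ∈ R | RWPositive p.1}

/-!
By C⁺, every `R`-step out of a positive word is already an `R⁺`-step and lands on a positive
word, so `R`-derivations from positive words are exactly `R⁺`-derivations. Termination of `R⁺`
is inherited from `R ⊇ R⁺`, and the common `R`-descendant provided by confluence of `R` is
reached from the two positive reducts by `R⁺`-derivations.
-/

theorem RWStep.mono {α : Type*} {R S : Set (List α × List α)} (hRS : R ⊆ S) :
    RWStep R ≤ RWStep S :=
  fun _ _ ⟨a, l, r, b, hlr, hu, hv⟩ => ⟨a, l, r, b, hRS hlr, hu, hv⟩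

theorem RWTerminating.mono {α : Type*} {R S : Set (List α × List α)} (hSR : S ⊆ R)
    (hR : RWTerminating R) : RWTerminating S :=
  fun ⟨f, hf⟩ => hR ⟨f, fun n => RWStep.mono hSR _ _ (hf n)⟩

theorem rwPos_subset {X : Type*} (R : Set (List (X ⊕ X) × List (X ⊕ X))) : RWPos R ⊆ R :=
  fun _ hp => hp.1

theorem rwPositive_append {X : Type*} {u v : List (X ⊕ X)} :
    RWPositive (u ++ v) ↔ RWPositive u ∧ RWPositive v :=
  List.forall_mem_append

section CPlus

variable {X : Type*} {R : Set (List (X ⊕ X) × List (X ⊕ X))}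
  (hCplus : ∀ p ∈ R, RWPositive p.1 → RWPositive p.2)
include hCplus

theorem RWStep.rwPos_of_positive {u v : List (X ⊕ X)} (hu : RWPositive u) (h : RWStep R u v) :
    RWStep (RWPos R) u v ∧ RWPositive v := by
  obtain ⟨a, l, r, b, hlr, rfl, rfl⟩ := h
  obtain ⟨⟨ha, hl⟩, hb⟩ := rwPositive_append.1 hu |>.imp_left rwPositive_append.1
  have hr : RWPositive r := hCplus (l, r) hlr hl
  exact ⟨⟨a, l, r, b, ⟨hlr, hl⟩, rfl, rfl⟩, rwPositive_append.2 ⟨rwPositive_append.2 ⟨ha, hr⟩, hb⟩⟩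

theorem reflTransGen_rwPos_of_positive {u v : List (X ⊕ X)} (hu : RWPositive u)
    (h : ReflTransGen (RWStep R) u v) :
    ReflTransGen (RWStep (RWPos R)) u v ∧ RWPositive v := by
  induction h with
  | refl => exact ⟨.refl, hu⟩
  | tail _ hstep ih =>
    obtain ⟨hstep', hpos⟩ := hstep.rwPos_of_positive hCplus ih.2
    exact ⟨ih.1.tail hstep', hpos⟩

end CPlus

/-- If `R` is complete and satisfies C⁺, then `R⁺` is a complete rewriting system on
positive words: it is terminating and any two `R⁺`-reducts of a positive word have a
common `R⁺`-descendant. -/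
theorem pos_rules_complete {X : Type*} (R : Set (List (X ⊕ X) × List (X ⊕ X)))
    (hT : RWTerminating R)
    (hConf : ∀ w u v : List (X ⊕ X), Relation.ReflTransGen (RWStep R) w u →
      Relation.ReflTransGen (RWStep R) w v →
      ∃ z, Relation.ReflTransGen (RWStep R) u z ∧ Relation.ReflTransGen (RWStep R) v z)
    (hCplus : ∀ p ∈ R, RWPositive p.1 → RWPositive p.2) :
    RWTerminating (RWPos R) ∧
    (∀ w u v : List (X ⊕ X), RWPositive w →
      Relation.ReflTransGen (RWStep (RWPos R)) w u →
      Relation.ReflTransGen (RWStep (RWPos R)) w v →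
      ∃ z, Relation.ReflTransGen (RWStep (RWPos R)) u z ∧
        Relation.ReflTransGen (RWStep (RWPos R)) v z) := by
  refine ⟨hT.mono (rwPos_subset R), fun w u v hw hu hv => ?_⟩
  have huR := ReflTransGen.mono (RWStep.mono (rwPos_subset R)) _ _ hu
  have hvR := ReflTransGen.mono (RWStep.mono (rwPos_subset R)) _ _ hv
  obtain ⟨z, huz, hvz⟩ := hConf w u v huR hvR
  have hupos := (reflTransGen_rwPos_of_positive hCplus hw huR).2
  have hvpos := (reflTransGen_rwPos_of_positive hCplus hw hvR).2
  exact ⟨z, (reflTransGen_rwPos_of_positive hCplus hupos huz).1,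
    (reflTransGen_rwPos_of_positive hCplus hvpos hvz).1⟩
end

section
/- Let R be a complete rewriting system on (X ∪ X⁻¹)* satisfying condition C⁺, and let u, v be positive words (elements of X*). Then u and v are equivalent modulo R if and only if they are equivalent modulo R⁺. -/
open Relation

/-! Every `R`-rewrite of a positive word applies a rule with positive left-hand side, so by C⁺
it is an `R⁺`-rewrite leading to a positive word. By confluence, `R`-equivalent words have a
common `R`-descendant; for positive `u` and `v` both reductions to it therefore take place
in `R⁺`. -/

theorem Relation.eqvGen_le_join_of_confluent {α : Type*} {r : α → α → Prop}
    (h : ∀ a b c, ReflTransGen r a b → ReflTransGen r a c → Join (ReflTransGen r) b c) :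
    EqvGen r ≤ Join (ReflTransGen r) :=
  haveI := (equivalence_join h).isEquiv
  EqvGen.eqvGen_le fun _ b hab => ⟨b, .single hab, .refl⟩

section Positive

variable {X : Type*} {R : Set (List (X ⊕ X) × List (X ⊕ X))}

theorem RWStep.rwPos_of_rwPositive (hC : ∀ p ∈ R, RWPositive p.1 → RWPositive p.2)
    {u v : List (X ⊕ X)} (hu : RWPositive u)
    (h : RWStep R u v) : RWStep (RWPos R) u v ∧ RWPositive v := by
  obtain ⟨a, l, r, b, hlr, rfl, rfl⟩ := h
  simp only [rwPositive_append] at hu ⊢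
  obtain ⟨⟨ha, hl⟩, hb⟩ := hu
  exact ⟨⟨a, l, r, b, ⟨hlr, hl⟩, rfl, rfl⟩, ⟨ha, hC _ hlr hl⟩, hb⟩

theorem Relation.ReflTransGen.rwPos_of_rwPositive
    (hC : ∀ p ∈ R, RWPositive p.1 → RWPositive p.2) {u v : List (X ⊕ X)} (hu : RWPositive u)
    (h : ReflTransGen (RWStep R) u v) :
    ReflTransGen (RWStep (RWPos R)) u v ∧ RWPositive v := by
  induction h with
  | refl => exact ⟨.refl, hu⟩
  | tail _ hstep ih =>
    obtain ⟨hpath, hpos⟩ := ih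
    obtain ⟨hstep', hpos'⟩ := hstep.rwPos_of_rwPositive hC hpos
    exact ⟨hpath.tail hstep', hpos'⟩

end Positive

theorem pos_equiv_iff_general {X : Type*} (R : Set (List (X ⊕ X) × List (X ⊕ X)))
    (hConf : ∀ w u v : List (X ⊕ X), Relation.ReflTransGen (RWStep R) w u →
      Relation.ReflTransGen (RWStep R) w v →
      ∃ z, Relation.ReflTransGen (RWStep R) u z ∧ Relation.ReflTransGen (RWStep R) v z)
    (hCplus : ∀ p ∈ R, RWPositive p.1 → RWPositive p.2)
    (u v : List (X ⊕ X)) (hu : RWPositive u) (hv : RWPositive v) :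
    Relation.EqvGen (RWStep R) u v ↔ Relation.EqvGen (RWStep (RWPos R)) u v := by
  constructor
  · intro h
    obtain ⟨z, huz, hvz⟩ := eqvGen_le_join_of_confluent hConf u v h
    exact join_le_of_equivalence_of_le (EqvGen.is_equivalence _)
      (EqvGen.reflTransGen_le_eqvGen _) u v
      ⟨z, (huz.rwPos_of_rwPositive hCplus hu).1, (hvz.rwPos_of_rwPositive hCplus hv).1⟩
  · exact EqvGen.mono (RWStep.mono fun _ hp => hp.1) u v

/-- If `R` is complete and satisfies C⁺, then two positive words are equivalent modulo
`R` iff they are equivalent modulo `R⁺`. -/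
theorem pos_equiv_iff {X : Type*} (R : Set (List (X ⊕ X) × List (X ⊕ X)))
    (hT : RWTerminating R)
    (hConf : ∀ w u v : List (X ⊕ X), Relation.ReflTransGen (RWStep R) w u →
      Relation.ReflTransGen (RWStep R) w v →
      ∃ z, Relation.ReflTransGen (RWStep R) u z ∧ Relation.ReflTransGen (RWStep R) v z)
    (hCplus : ∀ p ∈ R, RWPositive p.1 → RWPositive p.2)
    (u v : List (X ⊕ X)) (hu : RWPositive u) (hv : RWPositive v) :
    Relation.EqvGen (RWStep R) u v ↔ Relation.EqvGen (RWStep (RWPos R)) u v :=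
  pos_equiv_iff_general R hConf hCplus u v hu hv
end

section
/- The monoid Mon⟨a, b, c | a³ = c, b² = c, ac = ca, bc = cb⟩ embeds into the braid group B₃ = Gp⟨a, b, c | a³ = b² = c⟩: two positive words over {a, b, c} are equal in B₃ if and only if they are equal in the monoid. -/
open Relation

/-- The relators of the braid group `B₃ = Gp⟨a, b, c | a³ = c, b² = c⟩`. -/
def B3Rels : Set (FreeGroup (Fin 3)) :=
  {FreeGroup.of 0 ^ 3 * (FreeGroup.of 2)⁻¹, FreeGroup.of 1 ^ 2 * (FreeGroup.of 2)⁻¹}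

/-- The monoid relations `a³ = c`, `b² = c`, `ac = ca`, `bc = cb`. -/
def B3MonRules : Set (List (Fin 3) × List (Fin 3)) :=
  {([0, 0, 0], [2]), ([1, 1], [2]), ([0, 2], [2, 0]), ([1, 2], [2, 1])}

/-!
Pushing the letters of a positive word one at a time onto a word `cᵏ s`, where `s` is a word in
`a, b` with no factor `aaa` or `bb`, and moving each new `c` to the front (`c` is central), shows
that every positive word is equivalent in the monoid to such a normal form. On pairs `(k, s)`
with `k ∈ ℤ` the same pushing moves are permutations satisfying `a³ = c` and `b² = c`
(van der Waerden's trick), so `B₃` acts, and a positive word sends `(0, [])` to its normal form.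
Hence positive words equal in `B₃` have the same normal form.
-/

theorem Function.Bijective.of_iterate {α : Type*} {f : α → α} {n : ℕ} (hn : n ≠ 0)
    (h : Function.Bijective f^[n]) : Function.Bijective f := by
  obtain ⟨m, rfl⟩ := Nat.exists_eq_succ_of_ne_zero hn
  refine ⟨?_, ?_⟩
  · rw [Function.iterate_succ] at h
    exact h.1.of_comp
  · rw [Function.iterate_succ'] at h
    exact h.2.of_comp

namespace RWStep

variable {α : Type*} {R : Set (List α × List α)}

theorem of_mem {l r : List α} (h : (l, r) ∈ R) : RWStep R l r :=
  ⟨[], l, r, [], h, by simp, by simp⟩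

theorem append_append {u v : List α} (h : RWStep R u v) (a b : List α) :
    RWStep R (a ++ u ++ b) (a ++ v ++ b) := by
  obtain ⟨p, l, r, q, hm, rfl, rfl⟩ := h
  exact ⟨a ++ p, l, r, q ++ b, hm, by simp, by simp⟩

theorem eqvGen_append_append {u v : List α} (h : EqvGen (RWStep R) u v) (a b : List α) :
    EqvGen (RWStep R) (a ++ u ++ b) (a ++ v ++ b) := by
  induction h with
  | rel x y h => exact .rel _ _ (h.append_append a b)
  | refl x => exact .refl _
  | symm x y _ ih => exact ih.symm
  | trans x y z _ _ ih₁ ih₂ => exact ih₁.trans _ _ _ ih₂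

theorem eqvGen_cons {u v : List α} (h : EqvGen (RWStep R) u v) (x : α) :
    EqvGen (RWStep R) (x :: u) (x :: v) := by
  simpa using eqvGen_append_append h [x] []

theorem eqvGen_cons_replicate {x c : α} (h : ([x, c], [c, x]) ∈ R) (k : ℕ) :
    EqvGen (RWStep R) (x :: List.replicate k c) (List.replicate k c ++ [x]) := by
  induction k with
  | zero => exact .refl _
  | succ k ih =>
    have swap : EqvGen (RWStep R) (x :: c :: List.replicate k c)
        (c :: x :: List.replicate k c) := by
      simpa using eqvGen_append_append (.rel _ _ (of_mem h)) [] (List.replicate k c)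
    simpa [List.replicate_succ] using swap.trans _ _ _ (eqvGen_cons ih c)

theorem prod_map_eq_of_eqvGen {M : Type*} [Monoid M] (g : α → M)
    (hR : ∀ p ∈ R, (p.1.map g).prod = (p.2.map g).prod) {u v : List α}
    (h : EqvGen (RWStep R) u v) : (u.map g).prod = (v.map g).prod := by
  induction h with
  | rel x y h =>
    obtain ⟨a, l, r, b, hm, rfl, rfl⟩ := h
    simp only [List.map_append, List.prod_append, hR _ hm]
  | refl => rfl
  | symm _ _ _ ih => exact ih.symm
  | trans _ _ _ _ _ ih₁ ih₂ => exact ih₁.trans ih₂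

end RWStep

namespace B3

open List (replicate)

/-- Left multiplication of `cᵏ s`, encoded as `(k, s)`, by a generator, keeping `s` free of
`aaa` and `bb`. -/
def pushGen {K : Type*} [Add K] [One K] : Fin 3 → K × List (Fin 3) → K × List (Fin 3)
  | 2, (k, s) => (k + 1, s)
  | 0, (k, 0 :: 0 :: s) => (k + 1, s)
  | 1, (k, 1 :: s) => (k + 1, s)
  | x, (k, s) => (k, x :: s)

def normalForm {K : Type*} [Zero K] [Add K] [One K] (u : List (Fin 3)) : K × List (Fin 3) :=
  u.foldr pushGen (0, [])

def word (p : ℕ × List (Fin 3)) : List (Fin 3) := replicate p.1 2 ++ p.2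

theorem pushGen_natCast {K : Type*} [AddMonoidWithOne K] (x : Fin 3) (p : ℕ × List (Fin 3)) :
    pushGen x (Prod.map (Nat.cast : ℕ → K) id p) = Prod.map Nat.cast id (pushGen x p) := by
  fun_cases pushGen x p with
  | case1 k s => simp [pushGen.eq_1]
  | case2 k s => simp [pushGen.eq_2]
  | case3 k s => simp [pushGen.eq_3]
  | case4 x k s h2 h0 h1 => simp [pushGen.eq_4 _ _ _ h2 h0 h1]

theorem normalForm_natCast {K : Type*} [AddMonoidWithOne K] (u : List (Fin 3)) :
    (normalForm u : K × List (Fin 3)) =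
      Prod.map Nat.cast id (normalForm u : ℕ × List (Fin 3)) := by
  induction u with
  | nil => simp [normalForm]
  | cons x t ih =>
    simp only [normalForm, List.foldr_cons] at ih ⊢
    rw [ih, pushGen_natCast]

section Monoid

theorem comm_two_mem_B3MonRules {x : Fin 3} (hx : x ≠ 2) : ([x, 2], [2, x]) ∈ B3MonRules := by
  fin_cases x <;> simp_all [B3MonRules]

theorem eqvGen_cons_replicate_append {x : Fin 3} (hx : x ≠ 2) (k : ℕ) (s : List (Fin 3)) :
    EqvGen (RWStep B3MonRules) (x :: (replicate k 2 ++ s)) (replicate k 2 ++ x :: s) := by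
  simpa using RWStep.eqvGen_append_append
    (RWStep.eqvGen_cons_replicate (comm_two_mem_B3MonRules hx) k) [] s

theorem eqvGen_replicate_append_of_mem {l : List (Fin 3)} (h : (l, [2]) ∈ B3MonRules)
    (k : ℕ) (t : List (Fin 3)) :
    EqvGen (RWStep B3MonRules) (replicate k 2 ++ (l ++ t)) (replicate (k + 1) 2 ++ t) := by
  simpa [List.replicate_succ'] using
    RWStep.eqvGen_append_append (.rel _ _ (RWStep.of_mem h)) (replicate k 2) t

theorem eqvGen_pushGen (x : Fin 3) (p : ℕ × List (Fin 3)) :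
    EqvGen (RWStep B3MonRules) (x :: word p) (word (pushGen x p)) := by
  fun_cases pushGen x p with
  | case1 k s => exact .refl _
  | case2 k s =>
    exact (eqvGen_cons_replicate_append (x := 0) (by decide) k _).trans _ _ _
      (eqvGen_replicate_append_of_mem (l := [0, 0, 0]) (by simp [B3MonRules]) k s)
  | case3 k s =>
    exact (eqvGen_cons_replicate_append (x := 1) (by decide) k _).trans _ _ _
      (eqvGen_replicate_append_of_mem (l := [1, 1]) (by simp [B3MonRules]) k s)
  | case4 x k s hx => exact eqvGen_cons_replicate_append hx k s

theorem eqvGen_word_normalForm (u : List (Fin 3)) :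
    EqvGen (RWStep B3MonRules) u (word (normalForm u)) := by
  induction u with
  | nil => exact .refl _
  | cons x t ih => exact (RWStep.eqvGen_cons ih x).trans _ _ _ (eqvGen_pushGen x _)

end Monoid

section Group

theorem of_zero_pow_three : (PresentedGroup.of 0 : PresentedGroup B3Rels) ^ 3 = .of 2 := by
  simpa [PresentedGroup.of] using PresentedGroup.mk_eq_mk_of_mul_inv_mem (rels := B3Rels)
    (x := FreeGroup.of 0 ^ 3) (y := FreeGroup.of 2) (Or.inl rfl)

theorem of_one_pow_two : (PresentedGroup.of 1 : PresentedGroup B3Rels) ^ 2 = .of 2 := by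
  simpa [PresentedGroup.of] using PresentedGroup.mk_eq_mk_of_mul_inv_mem (rels := B3Rels)
    (x := FreeGroup.of 1 ^ 2) (y := FreeGroup.of 2) (Or.inr rfl)

theorem prod_map_of_eq_of_mem_B3MonRules :
    ∀ p ∈ B3MonRules, (p.1.map (PresentedGroup.of (rels := B3Rels))).prod =
      (p.2.map PresentedGroup.of).prod := by
  simp only [B3MonRules, Set.mem_insert_iff, Set.mem_singleton_iff]
  rintro _ (rfl | rfl | rfl | rfl)
  · simp [← of_zero_pow_three, pow_succ, mul_assoc]
  · simp [← of_one_pow_two, pow_succ]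
  · simp [← of_zero_pow_three, pow_succ, mul_assoc]
  · simp [← of_one_pow_two, pow_succ, mul_assoc]

def Reduced (s : List (Fin 3)) : Prop := ¬ [0, 0, 0] <:+: s ∧ ¬ [1, 1] <:+: s

theorem Reduced.of_infix {s t : List (Fin 3)} (hs : Reduced s) (hts : t <:+: s) : Reduced t :=
  ⟨fun h => hs.1 (h.trans hts), fun h => hs.2 (h.trans hts)⟩

variable {K : Type*} [Add K] [One K]

theorem Reduced.pushGen {p : K × List (Fin 3)} (hp : Reduced p.2) (x : Fin 3) :
    Reduced (pushGen x p).2 := by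
  fun_cases B3.pushGen x p with
  | case1 k s => exact hp
  | case2 k s => exact hp.of_infix (List.suffix_append [0, 0] s).isInfix
  | case3 k s => exact hp.of_infix (List.suffix_cons 1 s).isInfix
  | case4 x k s _ h0 h1 =>
    refine ⟨fun h => ?_, fun h => ?_⟩ <;> rcases List.infix_cons_iff.mp h with h | h
    · obtain ⟨rfl, t, rfl⟩ := List.cons_prefix_cons.mp h
      exact h0 t rfl rfl
    · exact hp.1 h
    · obtain ⟨rfl, t, rfl⟩ := List.cons_prefix_cons.mp h
      exact h1 t rfl rfl
    · exact hp.2 h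

theorem pushGen_zero_of_not_prefix {s : List (Fin 3)} (hs : ¬ [0] <+: s) (k : K) :
    pushGen 0 (k, s) = (k, 0 :: s) :=
  pushGen.eq_4 0 k s (by decide) (fun t _ ht => hs (by simp [ht])) (by simp)

theorem pushGen_zero_cons_of_not_prefix {s : List (Fin 3)} (hs : ¬ [0] <+: s) (k : K) :
    pushGen 0 (k, 0 :: s) = (k, 0 :: 0 :: s) :=
  pushGen.eq_4 0 k _ (by decide) (fun t _ ht => hs (by simp_all)) (by simp)

theorem pushGen_one_of_not_prefix {s : List (Fin 3)} (hs : ¬ [1] <+: s) (k : K) :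
    pushGen 1 (k, s) = (k, 1 :: s) :=
  pushGen.eq_4 1 k s (by decide) (by simp) (fun t _ ht => hs (by simp [ht]))

theorem pushGen_zero_iterate_three {p : K × List (Fin 3)} (hp : Reduced p.2) :
    (pushGen 0)^[3] p = pushGen 2 p := by
  obtain ⟨k, s⟩ := p
  by_cases h0 : [0] <+: s
  · obtain ⟨t, rfl⟩ := h0
    by_cases h00 : [0] <+: t
    · obtain ⟨t', rfl⟩ := h00
      have h000 : ¬ [0] <+: t' := fun ⟨r, hr⟩ => hp.1 ⟨[], r, by simp [← hr]⟩
      simp [pushGen.eq_1, pushGen.eq_2, pushGen_zero_of_not_prefix,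
        pushGen_zero_cons_of_not_prefix, h000]
    · simp [pushGen.eq_1, pushGen.eq_2, pushGen_zero_of_not_prefix,
        pushGen_zero_cons_of_not_prefix, h00]
  · simp [pushGen.eq_1, pushGen.eq_2, pushGen_zero_of_not_prefix,
      pushGen_zero_cons_of_not_prefix, h0]

theorem pushGen_one_iterate_two {p : K × List (Fin 3)} (hp : Reduced p.2) :
    (pushGen 1)^[2] p = pushGen 2 p := by
  obtain ⟨k, s⟩ := p
  by_cases h1 : [1] <+: s
  · obtain ⟨t, rfl⟩ := h1
    have h11 : ¬ [1] <+: t := fun ⟨r, hr⟩ => hp.2 ⟨[], r, by simp [← hr]⟩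
    simp [pushGen.eq_1, pushGen.eq_3, pushGen_one_of_not_prefix, h11]
  · simp [pushGen.eq_1, pushGen.eq_3, pushGen_one_of_not_prefix, h1]

def NormalWord : Type := {p : ℤ × List (Fin 3) // Reduced p.2}

namespace NormalWord

def push (x : Fin 3) (w : NormalWord) : NormalWord := ⟨pushGen x w.1, w.2.pushGen x⟩

theorem push_zero_iterate_three : (push 0)^[3] = push 2 :=
  funext fun w => Subtype.ext (pushGen_zero_iterate_three w.2)

theorem push_one_iterate_two : (push 1)^[2] = push 2 :=
  funext fun w => Subtype.ext (pushGen_one_iterate_two w.2)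

theorem push_two_bijective : Function.Bijective (push 2) := by
  refine Function.bijective_iff_has_inverse.mpr
    ⟨fun w => ⟨(w.1.1 - 1, w.1.2), w.2⟩, ?_, ?_⟩ <;>
    rintro ⟨⟨k, s⟩, hs⟩ <;> exact Subtype.ext (by simp [push, pushGen.eq_1])

theorem push_bijective (x : Fin 3) : Function.Bijective (push x) := by
  fin_cases x
  · exact .of_iterate (n := 3) (by norm_num) (push_zero_iterate_three ▸ push_two_bijective)
  · exact .of_iterate (n := 2) (by norm_num) (push_one_iterate_two ▸ push_two_bijective)
  · exact push_two_bijective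

end NormalWord

noncomputable def genPerm (x : Fin 3) : Equiv.Perm NormalWord :=
  Equiv.ofBijective _ (NormalWord.push_bijective x)

noncomputable def toPerm : PresentedGroup B3Rels →* Equiv.Perm NormalWord :=
  PresentedGroup.toGroup (f := genPerm) <| by
    simp only [B3Rels, Set.mem_insert_iff, Set.mem_singleton_iff]
    rintro _ (rfl | rfl) <;>
      simp only [map_mul, map_pow, map_inv, FreeGroup.lift_apply_of, mul_inv_eq_one] <;>
      refine Equiv.coe_fn_injective ?_
    · exact (Equiv.Perm.coe_pow _ _).trans NormalWord.push_zero_iterate_three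
    · exact (Equiv.Perm.coe_pow _ _).trans NormalWord.push_one_iterate_two

theorem toPerm_prod_apply (u : List (Fin 3)) (w : NormalWord) :
    (toPerm (u.map PresentedGroup.of).prod w).1 = u.foldr pushGen w.1 := by
  induction u with
  | nil => rfl
  | cons x t ih =>
    simp only [List.map_cons, List.prod_cons, map_mul, Equiv.Perm.mul_apply, List.foldr_cons,
      ← ih]
    rfl

theorem normalForm_eq_of_prod_eq {u v : List (Fin 3)}
    (h : (u.map PresentedGroup.of).prod = (v.map (PresentedGroup.of (rels := B3Rels))).prod) :
    (normalForm u : ℕ × List (Fin 3)) = normalForm v := by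
  let w₀ : NormalWord := ⟨(0, []), by simp [Reduced]⟩
  have hact : (toPerm (u.map PresentedGroup.of).prod w₀).1 =
      (toPerm (v.map PresentedGroup.of).prod w₀).1 := by rw [h]
  rw [toPerm_prod_apply, toPerm_prod_apply] at hact
  change (normalForm u : ℤ × List (Fin 3)) = normalForm v at hact
  rw [normalForm_natCast (K := ℤ) u, normalForm_natCast (K := ℤ) v] at hact
  exact Prod.map_injective.mpr ⟨Nat.cast_injective, Function.injective_id⟩ hact

end Group

end B3

/-- The monoid `Mon⟨a, b, c | a³ = c, b² = c, ac = ca, bc = cb⟩` embeds into `B₃`: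
two positive words are equal in `B₃` iff they are equal in the monoid. -/
theorem B3_monoid_embeds :
    ∀ u v : List (Fin 3),
      ((u.map fun i => (PresentedGroup.of i : PresentedGroup B3Rels)).prod =
        (v.map fun i => (PresentedGroup.of i : PresentedGroup B3Rels)).prod) ↔
      Relation.EqvGen (RWStep B3MonRules) u v := by
  intro u v
  refine ⟨fun h => ?_, RWStep.prod_map_eq_of_eqvGen _ B3.prod_map_of_eq_of_mem_B3MonRules⟩
  refine (B3.eqvGen_word_normalForm u).trans _ _ _ ?_
  rw [B3.normalForm_eq_of_prod_eq h]
  exact (B3.eqvGen_word_normalForm v).symm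
end
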